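/- For coprime integers 0 < a < r with Hirzebruch-Jung expansions r/a = [α₁,...,αₙ] and r/(r−a) = [β₁,...,β_l], one has Σᵢ₌₁ⁿ(αᵢ−2) + 1 = l and Σⱼ₌₁ˡ(βⱼ−2) + 1 = n. -/
import Mathlib


/-- Hirzebruch-Jung continued fraction: `hjCont [a1,...,an] = (p, q)` means
`[a1,...,an] = p/q` with `p, q` the standard (coprime) continuants. -/
def hjCont : List ℤ → ℤ × ℤ
  | [] => (1, 0)
  | a :: l => (a * (hjCont l).1 - (hjCont l).2, (hjCont l).1)

lemma hj_bounds (l : List ℤ) (h : ∀ x ∈ l, 2 ≤ x) :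
    0 ≤ (hjCont l).2 ∧ (hjCont l).2 < (hjCont l).1 := by
  induction l with
  | nil => simp [hjCont]
  | cons a t ih =>
    have ha : 2 ≤ a := h a (by simp)
    obtain ⟨h1, h2⟩ := ih (fun x hx => h x (by simp [hx]))
    simp only [hjCont]
    constructor
    · linarith
    · nlinarith

lemma hj_fst_ge_two (l : List ℤ) (hne : l ≠ []) (h : ∀ x ∈ l, 2 ≤ x) :
    2 ≤ (hjCont l).1 := by
  match l with
  | a :: t =>
    have hb := hj_bounds t (fun x hx => h x (by simp [hx]))
    have hbl := hj_bounds (a :: t) h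
    have hs : (hjCont (a :: t)).2 = (hjCont t).1 := rfl
    omega

lemma key (n : ℕ) : ∀ r a : ℤ, (r + a).toNat ≤ n → IsCoprime r a → 0 < a → a < r →
    ∀ αs βs : List ℤ, (∀ x ∈ αs, 2 ≤ x) → (∀ x ∈ βs, 2 ≤ x) →
    hjCont αs = (r, a) → hjCont βs = (r, r - a) →
    (αs.map (· - 2)).sum + 1 = (βs.length : ℤ) ∧
    (βs.map (· - 2)).sum + 1 = (αs.length : ℤ) := by
  induction n using Nat.strong_induction_on with
  | _ n ih =>
  intro r a hn hcop h1 h2 αs βs hα hβ hαs hβs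
  match αs, βs with
  | [], _ =>
    simp only [hjCont, Prod.mk.injEq] at hαs
    omega
  | _ :: _, [] =>
    simp only [hjCont, Prod.mk.injEq] at hβs
    omega
  | α₁ :: rest, β₁ :: restβ =>
    have hα₁ : 2 ≤ α₁ := hα _ (by simp)
    have hβ₁ : 2 ≤ β₁ := hβ _ (by simp)
    have hrest : ∀ x ∈ rest, 2 ≤ x := fun x hx => hα x (by simp [hx])
    have hrestβ : ∀ x ∈ restβ, 2 ≤ x := fun x hx => hβ x (by simp [hx])
    obtain ⟨p, q, hpq⟩ : ∃ p q, hjCont rest = (p, q) := ⟨_, _, rfl⟩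
    obtain ⟨P, Q, hPQ⟩ : ∃ P Q, hjCont restβ = (P, Q) := ⟨_, _, rfl⟩
    have hq0 : 0 ≤ q := by simpa [hpq] using (hj_bounds rest hrest).1
    have hqp : q < p := by simpa [hpq] using (hj_bounds rest hrest).2
    have hQ0 : 0 ≤ Q := by simpa [hPQ] using (hj_bounds restβ hrestβ).1
    have hQP : Q < P := by simpa [hPQ] using (hj_bounds restβ hrestβ).2
    have hαs' : α₁ * p - q = r ∧ p = a := by
      simpa only [hjCont, hpq, Prod.mk.injEq] using hαs
    have hβs' : β₁ * P - Q = r ∧ P = r - a := by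
      simpa only [hjCont, hPQ, Prod.mk.injEq] using hβs
    obtain ⟨hr1, hr2⟩ := hαs'
    obtain ⟨hR1, hR2⟩ := hβs'
    rcases lt_trichotomy (2 * a) r with hlt | heq | hgt
    · -- r > 2a : α₁ ≥ 3, β₁ = 2
      have hα₁3 : 3 ≤ α₁ := by nlinarith
      have hβ₁2 : β₁ = 2 := by nlinarith
      subst hβ₁2
      have hQval : Q = r - 2 * a := by omega
      have hcop' : IsCoprime (r - a) a := by
        have := hcop.add_mul_left_left (-1)
        rwa [show r + a * (-1) = r - a by ring] at this
      have hnewα : hjCont ((α₁ - 1) :: rest) = (r - a, a) := by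
        simp only [hjCont, hpq, Prod.mk.injEq]
        constructor
        · linear_combination hr1 - hr2
        · exact hr2
      have hnewβ : hjCont restβ = (r - a, (r - a) - a) := by
        rw [hPQ]
        simp only [Prod.mk.injEq]
        omega
      have hm : ((r - a) + a).toNat < n := by omega
      obtain ⟨ih1, ih2⟩ := ih _ hm (r - a) a le_rfl hcop' h1 (by omega)
        ((α₁ - 1) :: rest) restβ
        (by intro x hx; rcases List.mem_cons.mp hx with h | h
            · omega
            · exact hrest x h)
        hrestβ hnewα hnewβ
      simp only [List.map_cons, List.sum_cons, List.length_cons] at ih1 ih2 ⊢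
      push_cast at ih1 ih2 ⊢
      omega
    · -- r = 2a : then a = 1, r = 2
      have hu : IsUnit a := hcop.isUnit_of_dvd' ⟨2, by omega⟩ dvd_rfl
      have ha1 : a = 1 := by
        rcases Int.isUnit_iff.mp hu with h | h <;> omega
      have hr2' : r = 2 := by omega
      rcases rest with _ | ⟨c, t⟩
      · rcases restβ with _ | ⟨d, s⟩
        · simp only [hjCont, Prod.mk.injEq] at hpq hPQ
          obtain ⟨hp1, hq1⟩ := hpq
          obtain ⟨hP1, hQ1⟩ := hPQ
          subst hp1 hq1 hP1 hQ1
          have hα₁2 : α₁ = 2 := by omega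
          have hβ₁2 : β₁ = 2 := by omega
          subst hα₁2 hβ₁2
          simp
        · exfalso
          have := hj_fst_ge_two (d :: s) (by simp) hrestβ
          rw [hPQ] at this
          omega
      · exfalso
        have := hj_fst_ge_two (c :: t) (by simp) hrest
        rw [hpq] at this
        omega
    · -- r < 2a : α₁ = 2, β₁ ≥ 3
      have hβ₁3 : 3 ≤ β₁ := by nlinarith
      have hα₁2 : α₁ = 2 := by nlinarith
      subst hα₁2
      have hqval : q = 2 * a - r := by omega
      have hcop' : IsCoprime a (2 * a - r) := by
        have := hcop.symm.neg_right.add_mul_left_right 2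
        rwa [show -r + a * 2 = 2 * a - r by ring] at this
      have hnewα : hjCont rest = (a, 2 * a - r) := by
        rw [hpq]
        simp only [Prod.mk.injEq]
        omega
      have hnewβ : hjCont ((β₁ - 1) :: restβ) = (a, a - (2 * a - r)) := by
        simp only [hjCont, hPQ, Prod.mk.injEq]
        constructor
        · linear_combination hR1 - hR2
        · omega
      have hm : (a + (2 * a - r)).toNat < n := by omega
      obtain ⟨ih1, ih2⟩ := ih _ hm a (2 * a - r) le_rfl hcop' (by omega) (by omega)
        rest ((β₁ - 1) :: restβ)
        hrest
        (by intro x hx; rcases List.mem_cons.mp hx with h | h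
            · omega
            · exact hrestβ x h)
        hnewα hnewβ
      simp only [List.map_cons, List.sum_cons, List.length_cons] at ih1 ih2 ⊢
      push_cast at ih1 ih2 ⊢
      omega

theorem stmt1 (r a : ℤ) (hcop : IsCoprime r a) (h1 : 0 < a) (h2 : a < r)
    (αs βs : List ℤ) (hα : ∀ x ∈ αs, 2 ≤ x) (hβ : ∀ x ∈ βs, 2 ≤ x)
    (hαs : hjCont αs = (r, a)) (hβs : hjCont βs = (r, r - a)) :
    (αs.map (· - 2)).sum + 1 = (βs.length : ℤ) ∧
    (βs.map (· - 2)).sum + 1 = (αs.length : ℤ) := by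
  exact key (r + a).toNat r a le_rfl hcop h1 h2 αs βs hα hβ hαs hβs
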